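/- Let f₀ : [0,ℏ] → ℝ increase smoothly from 0 to 1, define f supported on [0,2ℏ] by f = f₀ on [0,ℏ] and f(u) = 1 − f₀(u−ℏ) on [ℏ,2ℏ], define g supported on [ℏ,2ℏ] by g = √(f − f²) there, and for n ≥ 1 set f_n(u) = Σ_{k=1}^n f(u − 2(k−1)ℏ) and similarly g_n(u) = Σ_{k=1}^n g(u − 2(k−1)ℏ). Then the projection p_n = g_n(u+ℏ)W + f_n(u) + g_n(u)W^{-1} satisfies τ(p_n) = nℏ. -/

import Mathlib

set_option maxHeartbeats 800000


open MeasureTheory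

/-- The trace `τ(f) = ∫_ℝ f₀(u) du`. -/
noncomputable def tau (f : ℤ → ℝ → ℂ) : ℂ := ∫ u : ℝ, f 0 u

/-- The bump `f`: equal to `f₀` on `[0,ℏ]`, to `1 - f₀(u-ℏ)` on `[ℏ,2ℏ]`, `0` outside. -/
noncomputable def fpiece (ℏ : ℝ) (f0 : ℝ → ℝ) (u : ℝ) : ℝ :=
  if u ≤ 0 ∨ 2 * ℏ ≤ u then 0 else if u ≤ ℏ then f0 u else 1 - f0 (u - ℏ)

/-- The bump `g = √(f - f²)` on `[ℏ,2ℏ]`, `0` outside. -/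
noncomputable def gpiece (ℏ : ℝ) (f0 : ℝ → ℝ) (u : ℝ) : ℝ :=
  if ℏ ≤ u ∧ u ≤ 2 * ℏ then Real.sqrt (fpiece ℏ f0 u - (fpiece ℏ f0 u) ^ 2) else 0

/-- `n` shifted copies of `f`: `f_n(u) = ∑_{k=1}^n f(u - 2(k-1)ℏ)`. -/
noncomputable def fshift (ℏ : ℝ) (f0 : ℝ → ℝ) (n : ℕ) (u : ℝ) : ℝ :=
  ∑ k ∈ Finset.range n, fpiece ℏ f0 (u - 2 * k * ℏ)

/-- `n` shifted copies of `g`. -/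
noncomputable def gshift (ℏ : ℝ) (f0 : ℝ → ℝ) (n : ℕ) (u : ℝ) : ℝ :=
  ∑ k ∈ Finset.range n, gpiece ℏ f0 (u - 2 * k * ℏ)

/-- The projection `p_n = g_n(u+ℏ)W + f_n(u) + g_n(u)W⁻¹` in coefficient form. -/
noncomputable def pN (ℏ : ℝ) (f0 : ℝ → ℝ) (n : ℕ) : ℤ → ℝ → ℂ :=
  fun m u =>
    if m = 1 then ((gshift ℏ f0 n (u + ℏ) : ℝ) : ℂ)
    else if m = 0 then ((fshift ℏ f0 n u : ℝ) : ℂ)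
    else if m = -1 then ((gshift ℏ f0 n u : ℝ) : ℂ) else 0

section piece
variable (ℏ : ℝ) (hℏ : 0 < ℏ) (f0 : ℝ → ℝ)

lemma fpiece_eqOn1 : Set.EqOn (fpiece ℏ f0) f0 (Set.Ioc 0 ℏ) := by
  intro u hu
  obtain ⟨h1, h2⟩ := hu
  rw [fpiece, if_neg, if_pos h2]
  rintro (h | h) <;> linarith

lemma fpiece_eqOn2 : Set.EqOn (fpiece ℏ f0) (fun u => 1 - f0 (u - ℏ)) (Set.Ioo ℏ (2*ℏ)) := by
  intro u hu
  obtain ⟨h1, h2⟩ := hu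
  rw [fpiece, if_neg, if_neg (by linarith)]
  rintro (h | h) <;> linarith

lemma fpiece_zero : ∀ u ∉ Set.Ioc 0 (2*ℏ), fpiece ℏ f0 u = 0 := by
  intro u hu
  rw [Set.mem_Ioc, not_and_or, not_lt, not_le] at hu
  rw [fpiece, if_pos]
  rcases hu with h | h
  · exact Or.inl h
  · exact Or.inr h.le

include hℏ in
lemma integrableOn_fpiece1 (hf0 : Continuous f0) :
    IntegrableOn (fpiece ℏ f0) (Set.Ioc 0 ℏ) :=
  (hf0.integrableOn_Ioc).congr_fun (fpiece_eqOn1 ℏ f0).symm measurableSet_Ioc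

lemma integrableOn_fpiece2 (hf0 : Continuous f0) :
    IntegrableOn (fpiece ℏ f0) (Set.Ioc ℏ (2*ℏ)) := by
  rw [integrableOn_Ioc_iff_integrableOn_Ioo]
  exact (((continuous_const.sub (hf0.comp (continuous_id.sub continuous_const))).integrableOn_Ioc).mono_set
    Set.Ioo_subset_Ioc_self).congr_fun (fpiece_eqOn2 ℏ f0).symm measurableSet_Ioo

include hℏ in
lemma integrable_fpiece (hf0 : Continuous f0) : Integrable (fpiece ℏ f0) := by
  have hunion : Set.Ioc 0 ℏ ∪ Set.Ioc ℏ (2*ℏ) = Set.Ioc 0 (2*ℏ) :=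
    Set.Ioc_union_Ioc_eq_Ioc hℏ.le (by linarith)
  have hio : IntegrableOn (fpiece ℏ f0) (Set.Ioc 0 (2*ℏ)) := by
    rw [← hunion]
    exact (integrableOn_fpiece1 ℏ hℏ f0 hf0).union (integrableOn_fpiece2 ℏ f0 hf0)
  have hind : Set.indicator (Set.Ioc 0 (2*ℏ)) (fpiece ℏ f0) = fpiece ℏ f0 := by
    apply Set.indicator_eq_self.2
    intro u hu
    by_contra h
    exact hu (fpiece_zero ℏ f0 u h)
  rw [← hind]
  exact hio.integrable_indicator measurableSet_Ioc

include hℏ in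
lemma integral_fpiece (hf0 : Continuous f0) : ∫ u, fpiece ℏ f0 u = ℏ := by
  have hunion : Set.Ioc 0 ℏ ∪ Set.Ioc ℏ (2*ℏ) = Set.Ioc 0 (2*ℏ) :=
    Set.Ioc_union_Ioc_eq_Ioc hℏ.le (by linarith)
  rw [← setIntegral_eq_integral_of_forall_compl_eq_zero (fpiece_zero ℏ f0), ← hunion,
    setIntegral_union (Set.Ioc_disjoint_Ioc_of_le le_rfl) measurableSet_Ioc
      (integrableOn_fpiece1 ℏ hℏ f0 hf0) (integrableOn_fpiece2 ℏ f0 hf0)]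
  have e1 : ∫ u in Set.Ioc 0 ℏ, fpiece ℏ f0 u = ∫ u in Set.Ioc 0 ℏ, f0 u :=
    setIntegral_congr_fun measurableSet_Ioc (fpiece_eqOn1 ℏ f0)
  have e2 : ∫ u in Set.Ioc ℏ (2*ℏ), fpiece ℏ f0 u = ∫ u in Set.Ioo ℏ (2*ℏ), (1 - f0 (u - ℏ)) := by
    rw [integral_Ioc_eq_integral_Ioo]
    exact setIntegral_congr_fun measurableSet_Ioo (fpiece_eqOn2 ℏ f0)
  have v1 : (∫ u in Set.Ioc 0 ℏ, f0 u) = ∫ u in (0:ℝ)..ℏ, f0 u :=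
    (intervalIntegral.integral_of_le hℏ.le).symm
  have v2 : (∫ u in Set.Ioo ℏ (2*ℏ), (1 - f0 (u - ℏ))) = ∫ u in ℏ..2*ℏ, (1 - f0 (u - ℏ)) := by
    rw [intervalIntegral.integral_of_le (by linarith : ℏ ≤ 2*ℏ), integral_Ioc_eq_integral_Ioo]
  have h2 : (∫ u in ℏ..2*ℏ, (1 - f0 (u - ℏ))) = ∫ u in ℏ - ℏ..2*ℏ - ℏ, (1 - f0 u) := by
    exact intervalIntegral.integral_comp_sub_right (fun u => 1 - f0 u) ℏ
  have h3 : (∫ u in (0:ℝ)..ℏ, (1 - f0 u)) = ℏ - ∫ u in (0:ℝ)..ℏ, f0 u := by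
    rw [intervalIntegral.integral_sub intervalIntegrable_const (hf0.intervalIntegrable 0 ℏ)]
    simp
  rw [e1, e2, v1, v2, h2, show ℏ - ℏ = 0 by ring, show 2*ℏ - ℏ = ℏ by ring, h3]
  ring

end piece

/-- The trace of the projection `p_n` equals `nℏ`. -/
theorem tau_pN (ℏ : ℝ) (hℏ : 0 < ℏ) (f0 : ℝ → ℝ)
    (hf0 : ContDiff ℝ (⊤ : ℕ∞) f0) (h00 : f0 0 = 0) (h01 : f0 ℏ = 1)
    (hmono : MonotoneOn f0 (Set.Icc 0 ℏ))
    (n : ℕ) (hn : 1 ≤ n) :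
    tau (pN ℏ f0 n) = (n : ℂ) * (ℏ : ℂ) := by
  have hf0c : Continuous f0 := hf0.continuous
  have key : (∫ u, fshift ℏ f0 n u) = n * ℏ := by
    unfold fshift
    rw [integral_finset_sum (μ := volume) (Finset.range n)
      (f := fun (k : ℕ) (u : ℝ) => fpiece ℏ f0 (u - 2 * k * ℏ))
      (fun k _ => (integrable_fpiece ℏ hℏ f0 hf0c).comp_sub_right (2 * k * ℏ))]
    have : ∀ k ∈ Finset.range n, (∫ u, fpiece ℏ f0 (u - 2 * k * ℏ)) = ℏ := by
      intro k _
      rw [integral_sub_right_eq_self (fpiece ℏ f0) (2 * k * ℏ)]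
      exact integral_fpiece ℏ hℏ f0 hf0c
    rw [Finset.sum_congr rfl this, Finset.sum_const, Finset.card_range, nsmul_eq_mul]
  have hp : (fun u => pN ℏ f0 n 0 u) = fun u => ((fshift ℏ f0 n u : ℝ) : ℂ) := by
    funext u; simp [pN]
  rw [tau, hp]
  norm_cast
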